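/- Under the coercivity condition m_ω^h > 0, the loss 𝓔(θ) = ‖g − θ*h‖²_{H¹_α(ρ)} with g = γ*h identifies γ: if 𝓔(θ) = 0 then θ = γ in L²(ρ). -/

import Mathlib

open MeasureTheory Complex Real

/-- Laplace transform of a real function on `[0,∞)`. -/
noncomputable def laplace (f : ℝ → ℝ) (z : ℂ) : ℂ :=
  ∫ t in Set.Ioi (0 : ℝ), (f t : ℂ) * Complex.exp (-z * t)

/-- Causal convolution on `[0,∞)`. -/
noncomputable def conv (f h : ℝ → ℝ) (t : ℝ) : ℝ :=
  ∫ s in (0 : ℝ)..t, f (t - s) * h s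

/-- Combined spectral weight `α₁|ĥ(z)|² + α₂|zĥ(z)|²` along the line `Re z = ω`. -/
noncomputable def specWeight (h : ℝ → ℝ) (α₁ α₂ ω τ : ℝ) : ℝ :=
  α₁ * ‖laplace h ((ω : ℂ) + τ * Complex.I)‖ ^ 2 +
    α₂ * ‖((ω : ℂ) + τ * Complex.I) * laplace h ((ω : ℂ) + τ * Complex.I)‖ ^ 2


open FourierTransform

open Set intervalIntegral

section aux

/-- `t ≤ exp(a t)/a` for `t ≥ 0`, `a > 0`. -/
lemma le_exp_div {a t : ℝ} (ha : 0 < a) : t ≤ a⁻¹ * Real.exp (a * t) := by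
  rcases le_or_gt t 0 with ht | ht
  · exact ht.trans (by positivity)
  · rw [le_inv_mul_iff₀ ha]
    calc a * t ≤ a * t + 1 := by linarith
    _ ≤ Real.exp (a * t) := Real.add_one_le_exp _

lemma conv_continuous {f h : ℝ → ℝ} (hf : Continuous f) (hh : Continuous h) :
    Continuous (conv f h) := by
  have : Continuous (Function.uncurry fun t s => f (t - s) * h s) :=
    ((hf.comp (continuous_fst.sub continuous_snd)).mul (hh.comp continuous_snd))
  exact intervalIntegral.continuous_parametric_intervalIntegral_of_continuous
    this continuous_id

lemma conv_bound {f h : ℝ → ℝ} (hf : Continuous f) (hh : Continuous h)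
    {Cf Ch σ : ℝ} (hσ : 0 < σ)
    (hfb : ∀ t, 0 ≤ t → |f t| ≤ Cf * Real.exp (-σ * t))
    (hhb : ∀ t, 0 ≤ t → |h t| ≤ Ch * Real.exp (-σ * t))
    {t : ℝ} (ht : 0 ≤ t) :
    |conv f h t| ≤ Cf * Ch * t * Real.exp (-σ * t) := by
  have hCf : 0 ≤ Cf := by
    have := hfb 0 le_rfl; simp at this; exact le_trans (abs_nonneg _) this
  have hCh : 0 ≤ Ch := by
    have := hhb 0 le_rfl; simp at this; exact le_trans (abs_nonneg _) this
  have key : ∀ s ∈ Icc (0:ℝ) t, |f (t - s) * h s| ≤ Cf * Ch * Real.exp (-σ * t) := by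
    intro s hs
    rw [abs_mul]
    have h1 := hfb (t - s) (by linarith [hs.2])
    have h2 := hhb s hs.1
    calc |f (t - s)| * |h s| ≤ (Cf * Real.exp (-σ * (t - s))) * (Ch * Real.exp (-σ * s)) := by
          apply mul_le_mul h1 h2 (abs_nonneg _) (by positivity)
    _ = Cf * Ch * Real.exp (-σ * t) := by
          rw [mul_mul_mul_comm, ← Real.exp_add]; ring_nf
  calc |conv f h t| ≤ ∫ s in (0:ℝ)..t, |f (t - s) * h s| :=
        intervalIntegral.abs_integral_le_integral_abs ht
  _ ≤ ∫ _s in (0:ℝ)..t, Cf * Ch * Real.exp (-σ * t) := by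
        apply intervalIntegral.integral_mono_on ht _ _ key
        · exact (((hf.comp (continuous_const.sub continuous_id)).mul hh).abs).intervalIntegrable _ _
        · exact intervalIntegrable_const
  _ = Cf * Ch * t * Real.exp (-σ * t) := by
        rw [intervalIntegral.integral_const, smul_eq_mul]; ring

end aux

lemma conv_eq_primitive {f h : ℝ → ℝ} (hf : ContDiff ℝ (⊤ : ℕ∞) f) (hh : Continuous h)
    {M : ℝ} (hf'b : ∀ u, 0 ≤ u → |deriv f u| ≤ M) (hhb : ∀ u, 0 ≤ u → |h u| ≤ M)
    {t : ℝ} (ht : 0 ≤ t) :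
    conv f h t = ∫ u in (0:ℝ)..t, (f 0 * h u + conv (deriv f) h u) := by
  have hf' : Continuous (deriv f) := hf.continuous_deriv (by simp)
  have hdiff : ∀ x, DifferentiableAt ℝ f x := fun x => hf.differentiable (by simp) x
  have hM0 : 0 ≤ M := le_trans (abs_nonneg _) (hf'b 0 le_rfl)
  set F : ℝ → ℝ → ℝ := fun u s => (Ioc (0:ℝ) u).indicator (fun s' => deriv f (u - s') * h s') s
    with hFdef
  have hfin : IsFiniteMeasure (volume.restrict (Ioc (0:ℝ) t)) :=
    ⟨by rw [Measure.restrict_apply_univ]; exact measure_Ioc_lt_top⟩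
  -- measurability of uncurry F
  have hset : MeasurableSet {p : ℝ × ℝ | 0 < p.2 ∧ p.2 ≤ p.1} := by
    rw [Set.setOf_and]
    exact (measurableSet_lt measurable_const measurable_snd).inter
      (measurableSet_le measurable_snd measurable_fst)
  have hFuncurry : Function.uncurry F =
      Set.indicator {p : ℝ × ℝ | 0 < p.2 ∧ p.2 ≤ p.1}
        (fun p => deriv f (p.1 - p.2) * h p.2) := by
    funext p
    simp only [Function.uncurry, hFdef, Set.indicator, Set.mem_Ioc, Set.mem_setOf_eq]
  have hFmeas : AEStronglyMeasurable (Function.uncurry F)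
      ((volume.restrict (Ioc (0:ℝ) t)).prod (volume.restrict (Ioc (0:ℝ) t))) := by
    rw [hFuncurry]
    exact (((hf'.comp (continuous_fst.sub continuous_snd)).mul
      (hh.comp continuous_snd)).stronglyMeasurable.indicator hset).aestronglyMeasurable
  have hbound : ∀ p : ℝ × ℝ, ‖Function.uncurry F p‖ ≤ M * M := by
    rintro ⟨u, s⟩
    by_cases hc : s ∈ Ioc (0:ℝ) u
    · simp only [Function.uncurry, hFdef, Set.indicator_of_mem hc, Real.norm_eq_abs, abs_mul]
      exact mul_le_mul (hf'b _ (by linarith [hc.2])) (hhb _ hc.1.le) (abs_nonneg _) hM0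
    · simp only [Function.uncurry, hFdef, Set.indicator_of_notMem hc, norm_zero]
      positivity
  have hFint : Integrable (Function.uncurry F)
      ((volume.restrict (Ioc (0:ℝ) t)).prod (volume.restrict (Ioc (0:ℝ) t))) :=
    (integrable_const (M * M)).mono' hFmeas (ae_of_all _ hbound)
  -- the triangle swap
  have key : (∫ u in (0:ℝ)..t, conv (deriv f) h u)
      = ∫ s in (0:ℝ)..t, h s * (f (t - s) - f 0) := by
    rw [integral_of_le ht, integral_of_le ht]
    calc ∫ u in Ioc (0:ℝ) t, conv (deriv f) h u
        = ∫ u in Ioc (0:ℝ) t, ∫ s in Ioc (0:ℝ) t, F u s := by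
          apply setIntegral_congr_fun measurableSet_Ioc
          intro u hu
          have huF : (fun x => ∫ (s : ℝ) in Ioc (0:ℝ) t, F x s) u
              = ∫ s in Ioc (0:ℝ) u, deriv f (u - s) * h s := by
            show (∫ s in Ioc (0:ℝ) t,
              (Ioc (0:ℝ) u).indicator (fun s' => deriv f (u - s') * h s') s) = _
            rw [setIntegral_indicator measurableSet_Ioc,
              Set.inter_eq_right.mpr (Ioc_subset_Ioc_right hu.2)]
          rw [huF, conv, integral_of_le hu.1.le]
      _ = ∫ s in Ioc (0:ℝ) t, ∫ u in Ioc (0:ℝ) t, F u s := integral_integral_swap hFint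
      _ = ∫ s in Ioc (0:ℝ) t, h s * (f (t - s) - f 0) := by
          apply setIntegral_congr_fun measurableSet_Ioc
          intro s hs
          have h1 : ∀ u, F u s = Set.indicator (Ici s) (fun u => deriv f (u - s) * h s) u := by
            intro u
            simp only [hFdef, Set.indicator, Set.mem_Ioc, Set.mem_Ici]
            by_cases hc : s ≤ u
            · simp [hc, hs.1]
            · simp [hc]
          calc ∫ u in Ioc (0:ℝ) t, F u s
              = ∫ u in Ioc (0:ℝ) t, Set.indicator (Ici s) (fun u => deriv f (u - s) * h s) u := by
                simp_rw [h1]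
            _ = ∫ u in Ioc (0:ℝ) t ∩ Ici s, deriv f (u - s) * h s :=
                setIntegral_indicator measurableSet_Ici
            _ = ∫ u in Icc s t, deriv f (u - s) * h s := by
                have hsets : Ioc (0:ℝ) t ∩ Ici s = Icc s t := by
                  ext u
                  simp only [Set.mem_inter_iff, Set.mem_Ioc, Set.mem_Ici, Set.mem_Icc]
                  constructor
                  · rintro ⟨⟨_, hut⟩, hsu⟩; exact ⟨hsu, hut⟩
                  · rintro ⟨hsu, hut⟩; exact ⟨⟨lt_of_lt_of_le hs.1 hsu, hut⟩, hsu⟩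
                rw [hsets]
            _ = ∫ u in Ioc s t, deriv f (u - s) * h s := integral_Icc_eq_integral_Ioc
            _ = (∫ u in Ioc s t, deriv f (u - s)) * h s := integral_mul_const _ _
            _ = (∫ u in s..t, deriv f (u - s)) * h s := by rw [integral_of_le hs.2]
            _ = h s * (f (t - s) - f 0) := by
                rw [intervalIntegral.integral_comp_sub_right (deriv f) s, sub_self,
                  intervalIntegral.integral_deriv_eq_sub (fun x _ => hdiff x)
                    (hf'.intervalIntegrable _ _), mul_comm]
  -- put things together
  have i1 : IntervalIntegrable (fun u => f 0 * h u) volume 0 t :=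
    (continuous_const.mul hh).intervalIntegrable _ _
  have i2 : IntervalIntegrable (conv (deriv f) h) volume 0 t :=
    (conv_continuous hf' hh).intervalIntegrable _ _
  have i3 : IntervalIntegrable (fun s => h s * (f (t - s) - f 0)) volume 0 t :=
    (hh.mul ((hf.continuous.comp (continuous_const.sub continuous_id)).sub
      continuous_const)).intervalIntegrable _ _
  rw [intervalIntegral.integral_add i1 i2, key, ← intervalIntegral.integral_add i1 i3]
  rw [conv]
  apply intervalIntegral.integral_congr
  intro s _
  ring

lemma conv_hasDerivAt {f h : ℝ → ℝ} (hf : ContDiff ℝ (⊤ : ℕ∞) f) (hh : Continuous h)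
    {M : ℝ} (hf'b : ∀ u, 0 ≤ u → |deriv f u| ≤ M) (hhb : ∀ u, 0 ≤ u → |h u| ≤ M)
    {t : ℝ} (ht : 0 < t) :
    HasDerivAt (conv f h) (f 0 * h t + conv (deriv f) h t) t := by
  set ψ : ℝ → ℝ := fun u => f 0 * h u + conv (deriv f) h u with hψdef
  have hψ : Continuous ψ :=
    (continuous_const.mul hh).add (conv_continuous (hf.continuous_deriv (by simp)) hh)
  have hprim : HasDerivAt (fun x => ∫ u in (0:ℝ)..x, ψ u) (ψ t) t :=
    intervalIntegral.integral_hasDerivAt_right (hψ.intervalIntegrable _ _)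
      hψ.stronglyMeasurable.stronglyMeasurableAtFilter hψ.continuousAt
  apply hprim.congr_of_eventuallyEq
  filter_upwards [Ioi_mem_nhds ht] with x hx
  exact conv_eq_primitive hf hh hf'b hhb (le_of_lt hx)

lemma laplace_conv {f h : ℝ → ℝ} (hf : Continuous f) (hh : Continuous h)
    {C σ : ℝ} (hσ : 0 < σ)
    (hfb : ∀ t, 0 ≤ t → |f t| ≤ C * Real.exp (-σ * t))
    (hhb : ∀ t, 0 ≤ t → |h t| ≤ C * Real.exp (-σ * t))
    {z : ℂ} (hz : 0 < z.re) :
    laplace (conv f h) z = laplace f z * laplace h z := by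
  have hC : 0 ≤ C := by
    have := hfb 0 le_rfl; simp at this; exact le_trans (abs_nonneg _) this
  set a : ℝ := σ + z.re with hadef
  have ha : 0 < a := by positivity
  set Φ : ℝ → ℂ := fun u => (f u : ℂ) * Complex.exp (-z * u) with hΦdef
  set Ψ : ℝ → ℂ := fun u => (h u : ℂ) * Complex.exp (-z * u) with hΨdef
  have hΦcont : Continuous Φ :=
    (Complex.continuous_ofReal.comp hf).mul
      (Complex.continuous_exp.comp (continuous_const.mul Complex.continuous_ofReal))
  have hΨcont : Continuous Ψ :=
    (Complex.continuous_ofReal.comp hh).mul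
      (Complex.continuous_exp.comp (continuous_const.mul Complex.continuous_ofReal))
  have hnorm : ∀ (g : ℝ → ℝ), (∀ t, 0 ≤ t → |g t| ≤ C * Real.exp (-σ * t)) → ∀ u, 0 ≤ u →
      ‖(g u : ℂ) * Complex.exp (-z * u)‖ ≤ C * Real.exp (-a * u) := by
    intro g hg u hu
    rw [norm_mul, Complex.norm_real, Real.norm_eq_abs, Complex.norm_exp]
    have : (-z * (u : ℂ)).re = -z.re * u := by simp
    rw [this]
    calc |g u| * Real.exp (-z.re * u) ≤ (C * Real.exp (-σ * u)) * Real.exp (-z.re * u) := by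
          apply mul_le_mul_of_nonneg_right (hg u hu) (Real.exp_nonneg _)
    _ = C * Real.exp (-a * u) := by rw [mul_assoc, ← Real.exp_add, hadef]; ring_nf
  have hΦb : ∀ u, 0 ≤ u → ‖Φ u‖ ≤ C * Real.exp (-a * u) := hnorm f hfb
  have hΨb : ∀ u, 0 ≤ u → ‖Ψ u‖ ≤ C * Real.exp (-a * u) := hnorm h hhb
  have hexpint : ∀ b : ℝ, 0 < b → IntegrableOn (fun u => C * Real.exp (-b * u)) (Ioi (0:ℝ)) :=
    fun b hb => (exp_neg_integrableOn_Ioi 0 hb).const_mul C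
  have hΦint : IntegrableOn Φ (Ioi (0:ℝ)) := by
    apply Integrable.mono' (hexpint a ha) (hΦcont.aestronglyMeasurable.restrict)
    exact (ae_restrict_iff' measurableSet_Ioi).2 (ae_of_all _ fun u hu => hΦb u (le_of_lt hu))
  have hΨint : IntegrableOn Ψ (Ioi (0:ℝ)) := by
    apply Integrable.mono' (hexpint a ha) (hΨcont.aestronglyMeasurable.restrict)
    exact (ae_restrict_iff' measurableSet_Ioi).2 (ae_of_all _ fun u hu => hΨb u (le_of_lt hu))
  set G : ℝ → ℝ → ℂ := fun t s => (Ioc (0:ℝ) t).indicator (fun s' => Φ (t - s') * Ψ s') s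
    with hGdef
  -- measurability
  have hset : MeasurableSet {p : ℝ × ℝ | 0 < p.2 ∧ p.2 ≤ p.1} := by
    rw [Set.setOf_and]
    exact (measurableSet_lt measurable_const measurable_snd).inter
      (measurableSet_le measurable_snd measurable_fst)
  have hGuncurry : Function.uncurry G =
      Set.indicator {p : ℝ × ℝ | 0 < p.2 ∧ p.2 ≤ p.1} (fun p => Φ (p.1 - p.2) * Ψ p.2) := by
    funext p
    simp only [Function.uncurry, hGdef, Set.indicator, Set.mem_Ioc, Set.mem_setOf_eq]
  have hGmeas : AEStronglyMeasurable (Function.uncurry G)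
      ((volume.restrict (Ioi (0:ℝ))).prod (volume.restrict (Ioi (0:ℝ)))) := by
    rw [hGuncurry]
    exact (((hΦcont.comp (continuous_fst.sub continuous_snd)).mul
      (hΨcont.comp continuous_snd)).stronglyMeasurable.indicator hset).aestronglyMeasurable
  -- slicewise integrability
  have hslice : ∀ t : ℝ, Integrable (fun s => G t s) (volume.restrict (Ioi (0:ℝ))) := by
    intro t
    apply Integrable.restrict (s := Ioi (0:ℝ))
    exact (((hΦcont.comp (continuous_const.sub continuous_id)).mul
      hΨcont).integrableOn_Ioc).integrable_indicator measurableSet_Ioc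
  -- bound for the norm integral
  have hnormint : ∀ t : ℝ, 0 < t →
      (∫ s in Ioi (0:ℝ), ‖G t s‖) ≤ C * C * t * Real.exp (-a * t) := by
    intro t ht
    have e1 : (∫ s in Ioi (0:ℝ), ‖G t s‖)
        = ∫ s in Ioc (0:ℝ) t, ‖Φ (t - s) * Ψ s‖ := by
      have : ∀ s, ‖G t s‖ = (Ioc (0:ℝ) t).indicator (fun s' => ‖Φ (t - s') * Ψ s'‖) s :=
        fun s => norm_indicator_eq_indicator_norm _ s
      simp_rw [this]
      rw [setIntegral_indicator measurableSet_Ioc,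
        Set.inter_eq_right.mpr Ioc_subset_Ioi_self]
    rw [e1]
    have e2 : ∫ s in Ioc (0:ℝ) t, ‖Φ (t - s) * Ψ s‖
        ≤ ∫ _s in Ioc (0:ℝ) t, C * C * Real.exp (-a * t) := by
      apply setIntegral_mono_on
      · exact (((hΦcont.comp (continuous_const.sub continuous_id)).mul
          hΨcont).norm).integrableOn_Ioc
      · exact integrableOn_const measure_Ioc_lt_top.ne
      · exact measurableSet_Ioc
      · intro s hs
        rw [norm_mul]
        calc ‖Φ (t - s)‖ * ‖Ψ s‖
            ≤ (C * Real.exp (-a * (t - s))) * (C * Real.exp (-a * s)) :=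
              mul_le_mul (hΦb _ (by linarith [hs.2])) (hΨb _ hs.1.le) (norm_nonneg _)
                (by positivity)
          _ = C * C * Real.exp (-a * t) := by
              rw [mul_mul_mul_comm, ← Real.exp_add]; ring_nf
    calc ∫ s in Ioc (0:ℝ) t, ‖Φ (t - s) * Ψ s‖ ≤ _ := e2
      _ = C * C * t * Real.exp (-a * t) := by
        rw [setIntegral_const, Real.volume_real_Ioc_of_le ht.le, smul_eq_mul, sub_zero]
        ring
  -- integrability of the double integral
  have hGint : Integrable (Function.uncurry G)
      ((volume.restrict (Ioi (0:ℝ))).prod (volume.restrict (Ioi (0:ℝ)))) := by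
    rw [integrable_prod_iff hGmeas]
    constructor
    · exact ae_of_all _ hslice
    · have hmeas2 : AEStronglyMeasurable (fun t => ∫ s in Ioi (0:ℝ), ‖G t s‖)
          (volume.restrict (Ioi (0:ℝ))) := hGmeas.norm.integral_prod_right'
      have hKint : IntegrableOn (fun t => (C * C * (a / 2)⁻¹) * Real.exp (-(a / 2) * t))
          (Ioi (0:ℝ)) := (exp_neg_integrableOn_Ioi 0 (by positivity)).const_mul _
      apply Integrable.mono' hKint hmeas2
      apply (ae_restrict_iff' measurableSet_Ioi).2 (ae_of_all _ _)
      intro t ht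
      have h0 : 0 ≤ ∫ s in Ioi (0:ℝ), ‖G t s‖ := integral_nonneg fun s => norm_nonneg _
      rw [Real.norm_eq_abs, _root_.abs_of_nonneg h0]
      calc (∫ s in Ioi (0:ℝ), ‖G t s‖) ≤ C * C * t * Real.exp (-a * t) := hnormint t ht
        _ ≤ C * C * ((a / 2)⁻¹ * Real.exp ((a / 2) * t)) * Real.exp (-a * t) := by
            apply mul_le_mul_of_nonneg_right _ (Real.exp_nonneg _)
            exact mul_le_mul_of_nonneg_left (le_exp_div (by positivity)) (by positivity)
        _ = (C * C * (a / 2)⁻¹) * Real.exp (-(a / 2) * t) := by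
            have he : Real.exp (a / 2 * t) * Real.exp (-a * t) = Real.exp (-(a / 2) * t) := by
              rw [← Real.exp_add]; ring_nf
            rw [show C * C * ((a / 2)⁻¹ * Real.exp (a / 2 * t)) * Real.exp (-a * t)
              = C * C * (a / 2)⁻¹ * (Real.exp (a / 2 * t) * Real.exp (-a * t)) by ring, he]
  -- main computation
  have step1 : laplace (conv f h) z = ∫ t in Ioi (0:ℝ), ∫ s in Ioi (0:ℝ), G t s := by
    rw [laplace]
    apply setIntegral_congr_fun measurableSet_Ioi
    intro t ht
    have e0 : ((conv f h t : ℝ) : ℂ) * Complex.exp (-z * t)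
        = ∫ s in (0:ℝ)..t, Φ (t - s) * Ψ s := by
      rw [conv, ← intervalIntegral.integral_ofReal, ← intervalIntegral.integral_mul_const]
      apply intervalIntegral.integral_congr
      intro s _
      have hexp : Complex.exp (-z * ((t : ℂ) - s)) * Complex.exp (-z * s)
          = Complex.exp (-z * t) := by
        rw [← Complex.exp_add]; ring_nf
      simp only [hΦdef, hΨdef]
      push_cast
      rw [← hexp]
      ring
    show ((conv f h t : ℝ) : ℂ) * Complex.exp (-z * t) = ∫ s in Ioi (0:ℝ), G t s
    rw [e0, integral_of_le (le_of_lt (Set.mem_Ioi.mp ht))]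
    simp only [hGdef]
    rw [setIntegral_indicator measurableSet_Ioc,
      Set.inter_eq_right.mpr Ioc_subset_Ioi_self]
  have step2 : (∫ t in Ioi (0:ℝ), ∫ s in Ioi (0:ℝ), G t s)
      = ∫ s in Ioi (0:ℝ), ∫ t in Ioi (0:ℝ), G t s := integral_integral_swap hGint
  have step3 : (∫ s in Ioi (0:ℝ), ∫ t in Ioi (0:ℝ), G t s)
      = ∫ s in Ioi (0:ℝ), Ψ s * laplace f z := by
    apply setIntegral_congr_fun measurableSet_Ioi
    intro s hs
    have h1 : ∀ t, G t s = Set.indicator (Ici s) (fun t => Φ (t - s) * Ψ s) t := by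
      intro t
      simp only [hGdef, Set.indicator, Set.mem_Ioc, Set.mem_Ici]
      by_cases hc : s ≤ t
      · simp [hc, Set.mem_Ioi.mp hs]
      · simp [hc]
    have h2 : Ioi (0:ℝ) ∩ Ici s = Ici s :=
      Set.inter_eq_right.mpr fun u hu => Set.mem_Ioi.mpr (lt_of_lt_of_le hs hu)
    have h3 : (∫ t in Ici s, Φ (t - s)) = laplace f z := by
      rw [← MeasureTheory.integral_indicator measurableSet_Ici]
      have : ∀ t : ℝ, (Ici s).indicator (fun t => Φ (t - s)) t
          = (Ici (0:ℝ)).indicator Φ (t - s) := by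
        intro t
        simp only [Set.indicator, Set.mem_Ici, sub_nonneg]
      simp_rw [this]
      rw [integral_sub_right_eq_self ((Ici (0:ℝ)).indicator Φ) s,
        MeasureTheory.integral_indicator measurableSet_Ici, integral_Ici_eq_integral_Ioi]
      rfl
    calc (∫ t in Ioi (0:ℝ), G t s)
        = ∫ t in Ioi (0:ℝ), Set.indicator (Ici s) (fun t => Φ (t - s) * Ψ s) t := by
          simp_rw [h1]
      _ = ∫ t in Ici s, Φ (t - s) * Ψ s := by
          rw [setIntegral_indicator measurableSet_Ici, h2]
      _ = (∫ t in Ici s, Φ (t - s)) * Ψ s := integral_mul_const _ _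
      _ = Ψ s * laplace f z := by rw [h3, mul_comm]
  rw [step1, step2, step3, MeasureTheory.integral_mul_const, mul_comm]
  rfl


section mainaux
open FourierTransform

lemma laplace_integrand_integrableOn {f : ℝ → ℝ} (hf : Continuous f)
    {C σ : ℝ} (hσ : 0 < σ)
    (hfb : ∀ t, 0 ≤ t → |f t| ≤ C * Real.exp (-σ * t))
    {z : ℂ} (hz : 0 < z.re) :
    IntegrableOn (fun t => (f t : ℂ) * Complex.exp (-z * t)) (Ioi (0:ℝ)) := by
  have hcont : Continuous (fun t : ℝ => (f t : ℂ) * Complex.exp (-z * t)) :=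
    (Complex.continuous_ofReal.comp hf).mul
      (Complex.continuous_exp.comp (continuous_const.mul Complex.continuous_ofReal))
  have ha : 0 < σ + z.re := by positivity
  apply Integrable.mono' ((exp_neg_integrableOn_Ioi 0 ha).const_mul C)
    hcont.aestronglyMeasurable.restrict
  apply (ae_restrict_iff' measurableSet_Ioi).2 (ae_of_all _ _)
  intro u hu
  rw [norm_mul, Complex.norm_real, Real.norm_eq_abs, Complex.norm_exp]
  have h1 : (-z * (u : ℂ)).re = -z.re * u := by simp
  rw [h1]
  calc |f u| * Real.exp (-z.re * u)
      ≤ (C * Real.exp (-σ * u)) * Real.exp (-z.re * u) :=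
        mul_le_mul_of_nonneg_right (hfb u (le_of_lt hu)) (Real.exp_nonneg _)
    _ = C * Real.exp (-(σ + z.re) * u) := by rw [mul_assoc, ← Real.exp_add]; ring_nf

end mainaux


/-- **Identifiability.** Under the coercivity condition `m_ω^h > 0`, if the
Sobolev loss `𝓔(θ) = ‖g − θ*h‖²_{H¹_α(ρ)}` with `g = γ*h` vanishes, then
`θ = γ` in `L²(ρ)`. -/
theorem sobolev_loss_identifiability (γ θ h : ℝ → ℝ) (C σ α₁ α₂ ω : ℝ)
    (hC : 0 < C) (hσ : 0 < σ) (hα₁ : 0 < α₁) (hα₂ : 0 < α₂) (hα : α₁ + α₂ = 1)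
    (hω : 0 < ω)
    (hsmoothγ : ContDiff ℝ (⊤ : ℕ∞) γ) (hsmoothθ : ContDiff ℝ (⊤ : ℕ∞) θ) (hsmoothh : ContDiff ℝ (⊤ : ℕ∞) h)
    (hdecayγ : ∀ t : ℝ, 0 ≤ t → |γ t| ≤ C * Real.exp (-σ * t))
    (hdecayθ : ∀ t : ℝ, 0 ≤ t → |θ t| ≤ C * Real.exp (-σ * t))
    (hdecayh : ∀ t : ℝ, 0 ≤ t → |h t| ≤ C * Real.exp (-σ * t))
    (hdecayγ' : ∀ t : ℝ, 0 ≤ t → |deriv γ t| ≤ C * Real.exp (-σ * t))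
    (hdecayθ' : ∀ t : ℝ, 0 ≤ t → |deriv θ t| ≤ C * Real.exp (-σ * t))
    (hdecayh' : ∀ t : ℝ, 0 ≤ t → |deriv h t| ≤ C * Real.exp (-σ * t))
    (hm : 0 < ⨅ τ : ℝ, specWeight h α₁ α₂ ω τ)
    (hloss : (∫ t in Set.Ioi (0 : ℝ),
        (α₁ * (conv (fun s => γ s - θ s) h t) ^ 2 +
          α₂ * (deriv (conv (fun s => γ s - θ s) h) t) ^ 2) * Real.exp (-2 * ω * t)) = 0) :
    (∫ t in Set.Ioi (0 : ℝ), (θ t - γ t) ^ 2 * Real.exp (-2 * ω * t)) = 0 := by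
  set f : ℝ → ℝ := fun s => γ s - θ s with hfdef
  have hsmoothf : ContDiff ℝ (⊤ : ℕ∞) f := hsmoothγ.sub hsmoothθ
  have hfcont : Continuous f := hsmoothf.continuous
  have hhcont : Continuous h := hsmoothh.continuous
  have habs_sub : ∀ a b : ℝ, |a - b| ≤ |a| + |b| := by
    intro a b
    rw [sub_eq_add_neg]
    exact (abs_add_le _ _).trans (by rw [abs_neg])
  have hfb : ∀ t, 0 ≤ t → |f t| ≤ 2 * C * Real.exp (-σ * t) := by
    intro t ht
    calc |f t| ≤ |γ t| + |θ t| := habs_sub _ _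
      _ ≤ C * Real.exp (-σ * t) + C * Real.exp (-σ * t) :=
          add_le_add (hdecayγ t ht) (hdecayθ t ht)
      _ = 2 * C * Real.exp (-σ * t) := by ring
  have hderivf : deriv f = fun t => deriv γ t - deriv θ t := by
    funext t
    exact deriv_fun_sub (hsmoothγ.differentiable (by simp) t) (hsmoothθ.differentiable (by simp) t)
  have hf'b : ∀ t, 0 ≤ t → |deriv f t| ≤ 2 * C * Real.exp (-σ * t) := by
    intro t ht
    rw [hderivf]
    calc |deriv γ t - deriv θ t| ≤ |deriv γ t| + |deriv θ t| := habs_sub _ _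
      _ ≤ C * Real.exp (-σ * t) + C * Real.exp (-σ * t) :=
          add_le_add (hdecayγ' t ht) (hdecayθ' t ht)
      _ = 2 * C * Real.exp (-σ * t) := by ring
  have hf'cont : Continuous (deriv f) := hsmoothf.continuous_deriv (by simp)
  have hexp_le_one : ∀ t : ℝ, 0 ≤ t → Real.exp (-σ * t) ≤ 1 := by
    intro t ht
    rw [Real.exp_le_one_iff]
    nlinarith
  have hhb : ∀ t, 0 ≤ t → |h t| ≤ C * Real.exp (-σ * t) := hdecayh
  -- the deriv formula and bounds
  have hM : ∀ u : ℝ, 0 ≤ u → |deriv f u| ≤ 2 * C :=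
    fun u hu => (hf'b u hu).trans (by nlinarith [hexp_le_one u hu])
  have hMh : ∀ u : ℝ, 0 ≤ u → |h u| ≤ 2 * C := by
    intro u hu
    calc |h u| ≤ C * Real.exp (-σ * u) := hhb u hu
      _ ≤ 2 * C := by nlinarith [hexp_le_one u hu]
  have hG : Continuous (conv f h) := conv_continuous hfcont hhcont
  have hGderiv : ∀ t : ℝ, 0 < t →
      deriv (conv f h) t = f 0 * h t + conv (deriv f) h t := by
    intro t ht
    exact (conv_hasDerivAt hsmoothf hhcont hM hMh ht).deriv
  have hGb : ∀ t : ℝ, 0 ≤ t → |conv f h t| ≤ 2 * C * C * t * Real.exp (-σ * t) :=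
    fun t ht => conv_bound hfcont hhcont hσ hfb hhb ht
  have hG'b : ∀ t : ℝ, 0 ≤ t → |conv (deriv f) h t| ≤ 2 * C * C * t * Real.exp (-σ * t) :=
    fun t ht => conv_bound hf'cont hhcont hσ hf'b hhb ht
  -- exponential domination
  have ht_exp : ∀ t : ℝ, t * Real.exp (-σ * t) ≤ (σ / 2)⁻¹ * Real.exp (-(σ/2) * t) := by
    intro t
    calc t * Real.exp (-σ * t)
        ≤ ((σ/2)⁻¹ * Real.exp ((σ/2) * t)) * Real.exp (-σ * t) :=
          mul_le_mul_of_nonneg_right (le_exp_div (by positivity)) (Real.exp_nonneg _)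
      _ = (σ/2)⁻¹ * Real.exp (-(σ/2) * t) := by
          rw [mul_assoc, ← Real.exp_add]; ring_nf
  set K₁ : ℝ := 2 * C * C * (σ / 2)⁻¹ with hK₁
  have hGb' : ∀ t : ℝ, 0 ≤ t → |conv f h t| ≤ K₁ * Real.exp (-(σ/2) * t) := by
    intro t ht
    calc |conv f h t| ≤ 2 * C * C * t * Real.exp (-σ * t) := hGb t ht
      _ = (2 * C * C) * (t * Real.exp (-σ * t)) := by ring
      _ ≤ (2 * C * C) * ((σ/2)⁻¹ * Real.exp (-(σ/2) * t)) :=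
          mul_le_mul_of_nonneg_left (ht_exp t) (by positivity)
      _ = K₁ * Real.exp (-(σ/2) * t) := by rw [hK₁]; ring
  set K₂ : ℝ := 2 * C * C + K₁ with hK₂
  have hG'deriv_b : ∀ t : ℝ, 0 < t →
      |deriv (conv f h) t| ≤ K₂ * Real.exp (-(σ/2) * t) := by
    intro t ht
    rw [hGderiv t ht]
    have e1 : |f 0 * h t| ≤ 2 * C * C * Real.exp (-(σ/2) * t) := by
      rw [abs_mul]
      have h1 : |f 0| ≤ 2 * C := by
        have := hfb 0 le_rfl; simpa using this
      have h2 : |h t| ≤ C * Real.exp (-(σ/2) * t) := by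
        calc |h t| ≤ C * Real.exp (-σ * t) := hhb t ht.le
          _ ≤ C * Real.exp (-(σ/2) * t) := by
            apply mul_le_mul_of_nonneg_left _ hC.le
            apply Real.exp_le_exp.2
            nlinarith
      calc |f 0| * |h t| ≤ (2 * C) * (C * Real.exp (-(σ/2) * t)) :=
            mul_le_mul h1 h2 (abs_nonneg _) (by positivity)
        _ = 2 * C * C * Real.exp (-(σ/2) * t) := by ring
    have e2 : |conv (deriv f) h t| ≤ K₁ * Real.exp (-(σ/2) * t) := by
      calc |conv (deriv f) h t| ≤ 2 * C * C * t * Real.exp (-σ * t) := hG'b t ht.le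
        _ = (2 * C * C) * (t * Real.exp (-σ * t)) := by ring
        _ ≤ (2 * C * C) * ((σ/2)⁻¹ * Real.exp (-(σ/2) * t)) :=
            mul_le_mul_of_nonneg_left (ht_exp t) (by positivity)
        _ = K₁ * Real.exp (-(σ/2) * t) := by rw [hK₁]; ring
    calc |f 0 * h t + conv (deriv f) h t|
        ≤ |f 0 * h t| + |conv (deriv f) h t| := abs_add_le _ _
      _ ≤ 2 * C * C * Real.exp (-(σ/2) * t) + K₁ * Real.exp (-(σ/2) * t) :=
          add_le_add e1 e2
      _ = K₂ * Real.exp (-(σ/2) * t) := by rw [hK₂]; ring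
  -- integrability of the loss integrand
  set X : ℝ → ℝ := fun t => (α₁ * (conv f h t) ^ 2 +
      α₂ * (deriv (conv f h) t) ^ 2) * Real.exp (-2 * ω * t) with hXdef
  have hXnonneg : ∀ t, 0 ≤ X t := by
    intro t
    apply mul_nonneg _ (Real.exp_nonneg _)
    exact add_nonneg (mul_nonneg hα₁.le (sq_nonneg _)) (mul_nonneg hα₂.le (sq_nonneg _))
  have hXmeas : AEStronglyMeasurable X (volume.restrict (Ioi (0:ℝ))) := by
    apply AEStronglyMeasurable.restrict
    apply Measurable.aestronglyMeasurable
    exact ((measurable_const.mul (hG.measurable.pow_const 2)).add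
      (measurable_const.mul ((measurable_deriv (conv f h)).pow_const 2))).mul
      (Real.measurable_exp.comp (measurable_const.mul measurable_id))
  set K : ℝ := α₁ * K₁ ^ 2 + α₂ * K₂ ^ 2 with hKdef
  have hXbound : ∀ t : ℝ, 0 < t → X t ≤ K * Real.exp (-σ * t) := by
    intro t ht
    have e1 : (conv f h t) ^ 2 ≤ K₁ ^ 2 * Real.exp (-σ * t) := by
      have := hGb' t ht.le
      have h2 : (conv f h t) ^ 2 ≤ (K₁ * Real.exp (-(σ/2) * t)) ^ 2 := by
        rw [← _root_.sq_abs]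
        exact pow_le_pow_left₀ (abs_nonneg _) this 2
      calc (conv f h t) ^ 2 ≤ (K₁ * Real.exp (-(σ/2) * t)) ^ 2 := h2
        _ = K₁ ^ 2 * Real.exp (-σ * t) := by
            rw [mul_pow, ← Real.exp_nat_mul]
            ring_nf
    have e2 : (deriv (conv f h) t) ^ 2 ≤ K₂ ^ 2 * Real.exp (-σ * t) := by
      have := hG'deriv_b t ht
      have h2 : (deriv (conv f h) t) ^ 2 ≤ (K₂ * Real.exp (-(σ/2) * t)) ^ 2 := by
        rw [← _root_.sq_abs]
        exact pow_le_pow_left₀ (abs_nonneg _) this 2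
      calc (deriv (conv f h) t) ^ 2 ≤ (K₂ * Real.exp (-(σ/2) * t)) ^ 2 := h2
        _ = K₂ ^ 2 * Real.exp (-σ * t) := by
            rw [mul_pow, ← Real.exp_nat_mul]
            ring_nf
    have hexp2 : Real.exp (-2 * ω * t) ≤ 1 := by
      rw [Real.exp_le_one_iff]; nlinarith
    calc X t ≤ (α₁ * (K₁ ^ 2 * Real.exp (-σ * t)) + α₂ * (K₂ ^ 2 * Real.exp (-σ * t))) * 1 := by
          apply mul_le_mul _ hexp2 (Real.exp_nonneg _) _
          · exact add_le_add (mul_le_mul_of_nonneg_left e1 hα₁.le)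
              (mul_le_mul_of_nonneg_left e2 hα₂.le)
          · positivity
      _ = K * Real.exp (-σ * t) := by rw [hKdef]; ring
  have hXint : IntegrableOn X (Ioi (0:ℝ)) := by
    apply Integrable.mono' ((exp_neg_integrableOn_Ioi 0 hσ).const_mul K) hXmeas
    apply (ae_restrict_iff' measurableSet_Ioi).2 (ae_of_all _ _)
    intro t ht
    rw [Real.norm_eq_abs, _root_.abs_of_nonneg (hXnonneg t)]
    exact hXbound t ht
  -- loss = 0 gives conv f h = 0 a.e. on Ioi 0
  have hX0 : X =ᶠ[ae (volume.restrict (Ioi (0:ℝ)))] 0 :=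
    (integral_eq_zero_iff_of_nonneg hXnonneg hXint).mp hloss
  have hconv0 : (fun t => conv f h t) =ᶠ[ae (volume.restrict (Ioi (0:ℝ)))] 0 := by
    filter_upwards [hX0] with t ht
    have ht' : (α₁ * (conv f h t) ^ 2 + α₂ * (deriv (conv f h) t) ^ 2)
        * Real.exp (-2 * ω * t) = 0 := ht
    have h1 : α₁ * (conv f h t) ^ 2 + α₂ * (deriv (conv f h) t) ^ 2 = 0 := by
      rcases mul_eq_zero.mp ht' with h | h
      · exact h
      · exact absurd h (Real.exp_ne_zero _)
    have h2 : α₁ * (conv f h t) ^ 2 = 0 ∧ α₂ * (deriv (conv f h) t) ^ 2 = 0 :=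
      (add_eq_zero_iff_of_nonneg (mul_nonneg hα₁.le (sq_nonneg _))
        (mul_nonneg hα₂.le (sq_nonneg _))).mp h1
    have h3 : (conv f h t) ^ 2 = 0 := by
      rcases mul_eq_zero.mp h2.1 with h | h
      · exact absurd h hα₁.ne'
      · exact h
    exact pow_eq_zero_iff (n := 2) (by norm_num) |>.mp h3
  -- Laplace of the convolution vanishes
  have hlap0 : ∀ z : ℂ, laplace (conv f h) z = 0 := by
    intro z
    rw [laplace]
    have hz0 : ∀ᵐ t ∂(volume.restrict (Ioi (0:ℝ))),
        ((conv f h t : ℝ) : ℂ) * Complex.exp (-z * t) = 0 := by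
      filter_upwards [hconv0] with t ht
      have ht' : conv f h t = 0 := ht
      rw [ht', Complex.ofReal_zero, zero_mul]
    rw [MeasureTheory.integral_congr_ae hz0, MeasureTheory.integral_zero]
  -- coercivity: laplace h nonzero on the line
  have hlaph_ne : ∀ τ : ℝ, laplace h ((ω:ℂ) + τ * Complex.I) ≠ 0 := by
    intro τ hzero
    have hbdd : BddBelow (Set.range fun τ => specWeight h α₁ α₂ ω τ) := by
      refine ⟨0, ?_⟩
      rintro x ⟨τ', rfl⟩
      exact add_nonneg (mul_nonneg hα₁.le (by positivity)) (mul_nonneg hα₂.le (by positivity))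
    have hle : (⨅ τ : ℝ, specWeight h α₁ α₂ ω τ) ≤ specWeight h α₁ α₂ ω τ := ciInf_le hbdd τ
    have hpos : 0 < specWeight h α₁ α₂ ω τ := lt_of_lt_of_le hm hle
    rw [specWeight, hzero] at hpos
    simp at hpos
  -- laplace f vanishes on the line
  have hlapf : ∀ τ : ℝ, laplace f ((ω:ℂ) + τ * Complex.I) = 0 := by
    intro τ
    have hre : ((ω:ℂ) + τ * Complex.I).re = ω := by simp
    have hzre : 0 < ((ω:ℂ) + τ * Complex.I).re := by rw [hre]; exact hω
    have hfb2 : ∀ t, 0 ≤ t → |f t| ≤ (2*C) * Real.exp (-σ * t) := hfb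
    have hhb2 : ∀ t, 0 ≤ t → |h t| ≤ (2*C) * Real.exp (-σ * t) := by
      intro t ht
      calc |h t| ≤ C * Real.exp (-σ * t) := hhb t ht
        _ ≤ (2*C) * Real.exp (-σ * t) := by nlinarith [Real.exp_nonneg (-σ * t)]
    have := laplace_conv hfcont hhcont hσ hfb2 hhb2 hzre
    rw [hlap0] at this
    rcases mul_eq_zero.mp this.symm with hf0 | hh0
    · exact hf0
    · exact absurd hh0 (hlaph_ne τ)
  -- Fourier transform of the windowed function vanishes
  set Fc : ℝ → ℂ := (Ioi (0:ℝ)).indicator (fun t => (f t : ℂ) * Complex.exp (-(ω:ℂ) * t))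
    with hFcdef
  have homre : (0:ℝ) < ((ω:ℂ)).re := by simpa using hω
  have hFcint : Integrable Fc :=
    (laplace_integrand_integrableOn hfcont hσ hfb homre).integrable_indicator measurableSet_Ioi
  have hFT0 : 𝓕 Fc = fun _ => (0:ℂ) := by
    funext ξ
    rw [Real.fourier_real_eq_integral_exp_smul]
    have hptwise : ∀ v : ℝ, Complex.exp (((-2 : ℝ) * π * v * ξ : ℝ) * Complex.I) • Fc v
        = (Ioi (0:ℝ)).indicator
          (fun t => (f t : ℂ) * Complex.exp (-((ω:ℂ) + ((2 * π * ξ : ℝ) : ℂ) * Complex.I) * t)) v := by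
      intro v
      by_cases hv : v ∈ Ioi (0:ℝ)
      · rw [hFcdef]
        simp only [Set.indicator_of_mem hv, smul_eq_mul]
        rw [mul_comm, mul_assoc, ← Complex.exp_add]
        congr 1
        push_cast
        ring
      · rw [hFcdef]
        simp only [Set.indicator_of_notMem hv, smul_zero]
    simp_rw [hptwise]
    rw [MeasureTheory.integral_indicator measurableSet_Ioi]
    exact hlapf (2 * π * ξ)
  -- Fourier inversion: f vanishes on Ioi 0
  have hf0 : ∀ v : ℝ, 0 < v → f v = 0 := by
    intro v hv
    have hcontat : ContinuousAt Fc v := by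
      have hg : ContinuousAt (fun t : ℝ => (f t : ℂ) * Complex.exp (-(ω:ℂ) * t)) v :=
        ((Complex.continuous_ofReal.comp hfcont).mul
          (Complex.continuous_exp.comp (continuous_const.mul
            Complex.continuous_ofReal))).continuousAt
      apply hg.congr
      filter_upwards [Ioi_mem_nhds hv] with x hx
      rw [hFcdef, Set.indicator_of_mem hx]
    have hFT_int : Integrable (𝓕 Fc) := by
      rw [hFT0]; exact integrable_zero _ _ _
    have hinv := hFcint.fourierInv_fourier_eq hFT_int hcontat
    rw [hFT0] at hinv
    have hzero : 𝓕⁻ (fun _ : ℝ => (0:ℂ)) v = 0 := by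
      rw [Real.fourierInv_eq]
      simp
    rw [hzero] at hinv
    have : Fc v = 0 := hinv.symm
    rw [hFcdef, Set.indicator_of_mem (Set.mem_Ioi.mpr hv)] at this
    rcases mul_eq_zero.mp this with h1 | h2
    · exact_mod_cast h1
    · exact absurd h2 (Complex.exp_ne_zero _)
  -- conclusion
  have : ∀ t ∈ Ioi (0:ℝ), (θ t - γ t) ^ 2 * Real.exp (-2 * ω * t) = (fun _ => (0:ℝ)) t := by
    intro t ht
    have h1 : f t = 0 := hf0 t ht
    have h2 : θ t - γ t = 0 := by
      have : γ t - θ t = 0 := h1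
      linarith
    rw [h2]
    ring
  rw [setIntegral_congr_fun measurableSet_Ioi this]
  simp
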